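/- In the TGL disk configuration, the angular position θ₁ of the exit point varies with the disk radius according to ∂θ₁/∂r = tan(ν₁)/r, where ν₁ is the angle between the outward radial direction at the exit point and the tangent direction of the curve there; similarly ∂θ₂/∂r = tan(ν₂)/r. -/

import Mathlib

open Metric Set Filter MeasureTheory Real RealInnerProductSpace

noncomputable section

/-- Rotation by `π/2` in the plane. -/
def rot (v : EuclideanSpace ℝ (Fin 2)) : EuclideanSpace ℝ (Fin 2) :=
  WithLp.toLp 2 ![-(v 1), v 0]

/-- The integral area invariant `g(s,r) = area(Ω ∩ D(γ s, r))`. -/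
def areaInv (Ω : Set (EuclideanSpace ℝ (Fin 2))) (γ : ℝ → EuclideanSpace ℝ (Fin 2))
    (s r : ℝ) : ℝ :=
  (volume (Ω ∩ closedBall (γ s) r)).toReal

/-- Tangentially graph-like at `γ s` with radius `r`. -/
def TGLAt (Ω : Set (EuclideanSpace ℝ (Fin 2))) (γ : ℝ → EuclideanSpace ℝ (Fin 2))
    (r s : ℝ) : Prop :=
  DifferentiableAt ℝ γ s ∧
  ∀ u ∈ frontier Ω ∩ closedBall (γ s) r,
    ∀ v ∈ frontier Ω ∩ closedBall (γ s) r, u ≠ v → ⟪deriv γ s, u - v⟫ ≠ 0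

/-! In the tangent frame at `γ s` the moving intersection point is `ρ (cos θ, sin θ)`. On the
branch `θ ∈ (kπ - π/2, kπ + π/2)` the angle is `kπ + arctan (y / x)`, so it is differentiable in
`ρ`, and the velocity of the point is `u(θ) + ρ θ' u(θ)^⊥`. The chain rule along the curve says
this velocity is `c · u(θ + ν)` with `c` the speed of the curve parameter, and comparing
components gives `c cos ν = 1` and `c sin ν = r θ'`, i.e. `θ' = tan ν / r`. -/

open Topology

theorem inner_self_rot (v : EuclideanSpace ℝ (Fin 2)) : ⟪v, rot v⟫ = 0 := by
  simp only [rot, PiLp.inner_apply, Fin.sum_univ_two, RCLike.inner_apply, conj_trivial,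
    Matrix.cons_val_zero, Matrix.cons_val_one]
  ring

theorem norm_rot (v : EuclideanSpace ℝ (Fin 2)) : ‖rot v‖ = ‖v‖ := by
  simp only [EuclideanSpace.norm_eq, rot, Fin.sum_univ_two, Matrix.cons_val_zero,
    Matrix.cons_val_one, norm_neg]
  rw [add_comm]

theorem eq_intCast_mul_pi_add_arctan {ρ θ : ℝ} {k : ℤ} (hρ : ρ ≠ 0)
    (hθ : θ - k * π ∈ Ioo (-(π / 2)) (π / 2)) :
    θ = k * π + arctan (ρ * sin θ / (ρ * cos θ)) := by
  rw [mul_div_mul_left _ _ hρ, ← tan_eq_sin_div_cos, ← tan_sub_int_mul_pi θ k,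
    arctan_tan hθ.1 hθ.2]
  ring

theorem hasDerivAt_polar_angle {θ a b : ℝ → ℝ} {r c ν : ℝ} (k : ℤ) (hr : r ≠ 0)
    (ha_eq : ∀ᶠ ρ in 𝓝 r, a ρ = ρ * cos (θ ρ)) (hb_eq : ∀ᶠ ρ in 𝓝 r, b ρ = ρ * sin (θ ρ))
    (hθ : ∀ᶠ ρ in 𝓝 r, θ ρ - k * π ∈ Ioo (-(π / 2)) (π / 2))
    (ha : HasDerivAt a (c * cos (θ r + ν)) r) (hb : HasDerivAt b (c * sin (θ r + ν)) r) :
    HasDerivAt θ (tan ν / r) r := by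
  have hcos : cos (θ r) ≠ 0 := by
    have := cos_pos_of_mem_Ioo hθ.self_of_nhds
    rw [cos_sub_int_mul_pi] at this
    exact right_ne_zero_of_mul this.ne'
  have hθ_diff : DifferentiableAt ℝ θ r := by
    have harctan : θ =ᶠ[𝓝 r] fun ρ => k * π + arctan (b ρ / a ρ) := by
      filter_upwards [ha_eq, hb_eq, hθ, eventually_ne_nhds hr] with ρ haρ hbρ hθρ hρ
      rw [haρ, hbρ]
      exact eq_intCast_mul_pi_add_arctan hρ hθρ
    have ha_ne : a r ≠ 0 := by rw [ha_eq.self_of_nhds]; exact mul_ne_zero hr hcos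
    exact ((hb.differentiableAt.div ha.differentiableAt ha_ne).arctan.const_add _)
      |>.congr_of_eventuallyEq harctan
  set θ' := deriv θ r
  have hθ' : HasDerivAt θ θ' r := hθ_diff.hasDerivAt
  have ha' : HasDerivAt a (cos (θ r) - r * sin (θ r) * θ') r := by
    refine (((hasDerivAt_id r).mul hθ'.cos).congr_of_eventuallyEq ha_eq).congr_deriv ?_
    simp only [id]
    ring
  have hb' : HasDerivAt b (sin (θ r) + r * cos (θ r) * θ') r := by
    refine (((hasDerivAt_id r).mul hθ'.sin).congr_of_eventuallyEq hb_eq).congr_deriv ?_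
    simp only [id]
    ring
  have h₁ := ha.unique ha'
  have h₂ := hb.unique hb'
  rw [cos_add] at h₁
  rw [sin_add] at h₂
  have hradial : c * cos ν = 1 := by
    linear_combination cos (θ r) * h₁ + sin (θ r) * h₂
      + (1 - c * cos ν) * sin_sq_add_cos_sq (θ r)
  have hangular : c * sin ν = r * θ' := by
    linear_combination cos (θ r) * h₂ - sin (θ r) * h₁
      + (r * θ' - c * sin ν) * sin_sq_add_cos_sq (θ r)
  have hcν : cos ν ≠ 0 := right_ne_zero_of_mul (hradial ▸ one_ne_zero)
  convert hθ' using 1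
  rw [tan_eq_sin_div_cos, div_div, div_eq_iff (mul_ne_zero hcν hr)]
  linear_combination cos ν * hangular - sin ν * hradial

theorem hasDerivAt_polar_angle_of_orthonormal {E : Type*} [NormedAddCommGroup E]
    [InnerProductSpace ℝ E] {e₁ e₂ x₀ : E} (he₁ : ‖e₁‖ = 1) (he₂ : ‖e₂‖ = 1)
    (he₁₂ : ⟪e₁, e₂⟫ = 0) {q : ℝ → E} {θ : ℝ → ℝ} {r c ν : ℝ} (k : ℤ) (hr : r ≠ 0)
    (hq : ∀ᶠ ρ in 𝓝 r, q ρ = x₀ + (ρ * cos (θ ρ)) • e₁ + (ρ * sin (θ ρ)) • e₂)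
    (hθ : ∀ᶠ ρ in 𝓝 r, θ ρ - k * π ∈ Ioo (-(π / 2)) (π / 2))
    (hq' : HasDerivAt q (c • (cos (θ r + ν) • e₁ + sin (θ r + ν) • e₂)) r) :
    HasDerivAt θ (tan ν / r) r := by
  have coord₁ (x y : ℝ) : ⟪e₁, x • e₁ + y • e₂⟫ = x := by
    simp [inner_add_right, real_inner_smul_right, he₁, he₁₂]
  have coord₂ (x y : ℝ) : ⟪e₂, x • e₁ + y • e₂⟫ = y := by
    simp [inner_add_right, real_inner_smul_right, he₂, real_inner_comm e₁ e₂, he₁₂]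
  have hq_sub : ∀ᶠ ρ in 𝓝 r, q ρ - x₀ = (ρ * cos (θ ρ)) • e₁ + (ρ * sin (θ ρ)) • e₂ := by
    filter_upwards [hq] with ρ hρ
    rw [hρ, add_assoc, add_sub_cancel_left]
  refine hasDerivAt_polar_angle (a := fun ρ => ⟪e₁, q ρ - x₀⟫) (b := fun ρ => ⟪e₂, q ρ - x₀⟫)
    (c := c) k hr ?_ ?_ hθ ?_ ?_
  · filter_upwards [hq_sub] with ρ hρ
    rw [hρ, coord₁]
  · filter_upwards [hq_sub] with ρ hρ
    rw [hρ, coord₂]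
  · refine ((hasDerivAt_const r e₁).inner ℝ (hq'.sub_const x₀)).congr_deriv ?_
    rw [inner_zero_left, add_zero, real_inner_smul_right, coord₁]
  · refine ((hasDerivAt_const r e₂).inner ℝ (hq'.sub_const x₀)).congr_deriv ?_
    rw [inner_zero_left, add_zero, real_inner_smul_right, coord₂]

theorem statement18_general
    (Ω : Set (EuclideanSpace ℝ (Fin 2)))
    (γ : ℝ → EuclideanSpace ℝ (Fin 2))
    (hC2 : ContDiff ℝ 2 γ)
    (harc : ∀ t, ‖deriv γ t‖ = 1)
    (s r δ : ℝ) (hr : 0 < r) (hδ : 0 < δ)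
    (θ₁ θ₂ sPlus sMinus : ℝ → ℝ)
    -- θ₁ ρ and θ₂ ρ are the angular positions, in the tangent frame at γ s, of the
    -- exit point γ (sPlus ρ) and entry point γ (sMinus ρ) on the circle C(γ s, ρ):
    (hθ₁ : ∀ ρ ∈ Set.Ioo (r - δ) (r + δ), θ₁ ρ ∈ Set.Ioo (-(π/2)) (π/2))
    (hθ₂ : ∀ ρ ∈ Set.Ioo (r - δ) (r + δ), θ₂ ρ ∈ Set.Ioo (π/2) (3*π/2))
    (hexit : ∀ ρ ∈ Set.Ioo (r - δ) (r + δ),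
      γ (sPlus ρ) = γ s + (ρ * Real.cos (θ₁ ρ)) • deriv γ s
        + (ρ * Real.sin (θ₁ ρ)) • rot (deriv γ s) ∧
      γ (sPlus ρ) ∈ frontier Ω ∩ sphere (γ s) ρ)
    (hentry : ∀ ρ ∈ Set.Ioo (r - δ) (r + δ),
      γ (sMinus ρ) = γ s + (ρ * Real.cos (θ₂ ρ)) • deriv γ s
        + (ρ * Real.sin (θ₂ ρ)) • rot (deriv γ s) ∧
      γ (sMinus ρ) ∈ frontier Ω ∩ sphere (γ s) ρ)
    (hsP : DifferentiableAt ℝ sPlus r) (hsM : DifferentiableAt ℝ sMinus r)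
    (ν₁ ν₂ : ℝ)
    -- ν₁ (resp. ν₂) is the angle between the outward radial direction at the exit
    -- (resp. entry) point and the curve's tangent direction there:
    (htan₁ : deriv γ (sPlus r) =
      Real.cos (θ₁ r + ν₁) • deriv γ s + Real.sin (θ₁ r + ν₁) • rot (deriv γ s))
    (htan₂ : deriv γ (sMinus r) =
      -(Real.cos (θ₂ r + ν₂) • deriv γ s + Real.sin (θ₂ r + ν₂) • rot (deriv γ s))) :
    HasDerivAt θ₁ (Real.tan ν₁ / r) r ∧ HasDerivAt θ₂ (Real.tan ν₂ / r) r := by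
  have hnhds : Ioo (r - δ) (r + δ) ∈ 𝓝 r := Ioo_mem_nhds (by linarith) (by linarith)
  have hγ : Differentiable ℝ γ := hC2.differentiable (by norm_num)
  have he₂ : ‖rot (deriv γ s)‖ = 1 := (norm_rot _).trans (harc s)
  constructor
  · refine hasDerivAt_polar_angle_of_orthonormal (harc s) he₂ (inner_self_rot _) 0 hr.ne'
      (x₀ := γ s) (q := γ ∘ sPlus) (c := deriv sPlus r) ?_ ?_ ?_
    · filter_upwards [hnhds] with ρ hρ using (hexit ρ hρ).1
    · filter_upwards [hnhds] with ρ hρ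
      simpa using hθ₁ ρ hρ
    · rw [← htan₁]
      exact (hγ _).hasDerivAt.scomp r hsP.hasDerivAt
  · refine hasDerivAt_polar_angle_of_orthonormal (harc s) he₂ (inner_self_rot _) 1 hr.ne'
      (x₀ := γ s) (q := γ ∘ sMinus) (c := -deriv sMinus r) ?_ ?_ ?_
    · filter_upwards [hnhds] with ρ hρ using (hentry ρ hρ).1
    · filter_upwards [hnhds] with ρ hρ
      obtain ⟨h_lo, h_hi⟩ := hθ₂ ρ hρ
      constructor <;> push_cast <;> linarith
    · rw [← neg_smul_neg, ← htan₂, neg_neg]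
      exact (hγ _).hasDerivAt.scomp r hsM.hasDerivAt

/-- The angular positions of the intersection points vary with the radius according to
`∂θ₁/∂r = tan(ν₁)/r` and `∂θ₂/∂r = tan(ν₂)/r`. -/
theorem statement18
    (Ω : Set (EuclideanSpace ℝ (Fin 2))) (hΩ : IsCompact Ω)
    (L : ℝ) (hL : 0 < L)
    (γ : ℝ → EuclideanSpace ℝ (Fin 2))
    (hC2 : ContDiff ℝ 2 γ)
    (harc : ∀ t, ‖deriv γ t‖ = 1)
    (himg : γ '' Set.Icc 0 L = frontier Ω)
    (hclosed : γ 0 = γ L)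
    (hinj : Set.InjOn γ (Set.Ico 0 L))
    (s r δ : ℝ) (hr : 0 < r) (hδ : 0 < δ) (hδr : δ < r)
    -- γ is TGL for all radii near r:
    (hTGL : ∀ ρ ∈ Set.Ioo (r - δ) (r + δ), ∀ t ∈ Set.Icc 0 L, TGLAt Ω γ ρ t)
    (θ₁ θ₂ sPlus sMinus : ℝ → ℝ)
    -- θ₁ ρ and θ₂ ρ are the angular positions, in the tangent frame at γ s, of the
    -- exit point γ (sPlus ρ) and entry point γ (sMinus ρ) on the circle C(γ s, ρ):
    (hθ₁ : ∀ ρ ∈ Set.Ioo (r - δ) (r + δ), θ₁ ρ ∈ Set.Ioo (-(π/2)) (π/2))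
    (hθ₂ : ∀ ρ ∈ Set.Ioo (r - δ) (r + δ), θ₂ ρ ∈ Set.Ioo (π/2) (3*π/2))
    (hexit : ∀ ρ ∈ Set.Ioo (r - δ) (r + δ),
      γ (sPlus ρ) = γ s + (ρ * Real.cos (θ₁ ρ)) • deriv γ s
        + (ρ * Real.sin (θ₁ ρ)) • rot (deriv γ s) ∧
      γ (sPlus ρ) ∈ frontier Ω ∩ sphere (γ s) ρ)
    (hentry : ∀ ρ ∈ Set.Ioo (r - δ) (r + δ),
      γ (sMinus ρ) = γ s + (ρ * Real.cos (θ₂ ρ)) • deriv γ s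
        + (ρ * Real.sin (θ₂ ρ)) • rot (deriv γ s) ∧
      γ (sMinus ρ) ∈ frontier Ω ∩ sphere (γ s) ρ)
    (hsP : DifferentiableAt ℝ sPlus r) (hsM : DifferentiableAt ℝ sMinus r)
    (ν₁ ν₂ : ℝ) (hν₁ : ν₁ ∈ Set.Ioo (-(π/2)) (π/2)) (hν₂ : ν₂ ∈ Set.Ioo (-(π/2)) (π/2))
    -- ν₁ (resp. ν₂) is the angle between the outward radial direction at the exit
    -- (resp. entry) point and the curve's tangent direction there:
    (htan₁ : deriv γ (sPlus r) =
      Real.cos (θ₁ r + ν₁) • deriv γ s + Real.sin (θ₁ r + ν₁) • rot (deriv γ s))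
    (htan₂ : deriv γ (sMinus r) =
      -(Real.cos (θ₂ r + ν₂) • deriv γ s + Real.sin (θ₂ r + ν₂) • rot (deriv γ s))) :
    HasDerivAt θ₁ (Real.tan ν₁ / r) r ∧ HasDerivAt θ₂ (Real.tan ν₂ / r) r :=
  statement18_general Ω γ hC2 harc s r δ hr hδ θ₁ θ₂ sPlus sMinus hθ₁ hθ₂ hexit hentry hsP hsM ν₁ ν₂
    htan₁ htan₂
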